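/- For any odd positive integer n, the sum over k from 1 to n-1 of ((-2)^{k-1} / k)·C(n, k-1) equals 2^{n-1}(1-n)/(n+1). -/

import Mathlib

/-!
Since `(n + 1) * C(n, k - 1) / k = C(n + 1, k)`, the sum is `1 / ((n + 1) x)` times the binomial
expansion of `(x + 1) ^ (n + 1)` with its two lowest and two highest terms removed. At `x = -2`
and `n` odd, `(x + 1) ^ (n + 1) = 1`, and the removed top terms are explicit powers of two.
-/

open Finset

theorem Nat.cast_choose_div_add_one {K : Type*} [Field K] [CharZero K] (n k : ℕ) :
    (n.choose k : K) / (k + 1) = (n + 1).choose (k + 1) / (n + 1) := by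
  rw [div_eq_div_iff k.cast_add_one_ne_zero n.cast_add_one_ne_zero]
  exact_mod_cast (mul_comm _ _).trans (Nat.add_one_mul_choose_eq n k)

theorem sum_range_pow_succ_mul_choose {R : Type*} [CommRing R] (x : R) (n : ℕ) :
    ∑ i ∈ range n, x ^ (i + 1) * (n + 2).choose (i + 1)
      = (x + 1) ^ (n + 2) - 1 - (n + 2) * x ^ (n + 1) - x ^ (n + 2) := by
  rw [add_pow, sum_range_succ, sum_range_succ, sum_range_succ']
  simp only [Nat.reduceSubDiff, one_pow, mul_one, pow_zero, tsub_zero, Nat.choose_zero_right,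
    Nat.cast_one, add_tsub_cancel_left, Nat.choose_succ_self_right, Nat.cast_add, tsub_self,
    Nat.choose_self]
  ring

theorem sum_Icc_pow_div_mul_choose {K : Type*} [Field K] [CharZero K] {x : K} (hx : x ≠ 0)
    (n : ℕ) :
    ∑ k ∈ Icc 1 n, x ^ (k - 1) / k * (n + 1).choose (k - 1)
      = ((x + 1) ^ (n + 2) - 1 - (n + 2) * x ^ (n + 1) - x ^ (n + 2)) / ((n + 2) * x) := by
  rw [← sum_range_pow_succ_mul_choose, sum_div, ← Ico_add_one_right_eq_Icc,
    sum_Ico_eq_sum_range, add_tsub_cancel_right]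
  refine sum_congr rfl fun i _ => ?_
  rw [add_tsub_cancel_left, mul_comm, ← mul_div_assoc, mul_div_right_comm, Nat.cast_add,
    Nat.cast_one, add_comm (1 : K), Nat.cast_choose_div_add_one]
  field_simp
  push_cast
  ring

theorem stmt4_general (n : ℕ) (hodd : Odd n) :
    ∑ k ∈ Finset.Icc 1 (n - 1), ((-2 : ℚ) ^ (k - 1) / k) * (n.choose (k - 1))
      = (2 : ℚ) ^ (n - 1) * (1 - n) / (n + 1) := by
  obtain ⟨m, rfl⟩ := hodd
  rw [add_tsub_cancel_right, sum_Icc_pow_div_mul_choose (by norm_num)]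
  have h_base : ((-2 : ℚ) + 1) ^ (2 * m + 2) = 1 := by norm_num [pow_add, pow_mul]
  have h_odd : (-2 : ℚ) ^ (2 * m + 1) = -2 ^ (2 * m + 1) := Odd.neg_pow ⟨m, rfl⟩ 2
  have h_even : (-2 : ℚ) ^ (2 * m + 2) = 2 ^ (2 * m + 2) := Even.neg_pow ⟨m + 1, by ring⟩ 2
  rw [h_base, h_odd, h_even]
  push_cast
  field_simp
  ring

theorem stmt4 (n : ℕ) (hn : 0 < n) (hodd : Odd n) :
    ∑ k ∈ Finset.Icc 1 (n - 1), ((-2 : ℚ) ^ (k - 1) / k) * (n.choose (k - 1))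
      = (2 : ℚ) ^ (n - 1) * (1 - n) / (n + 1) :=
  stmt4_general n hodd
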